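/- arXiv:2409.17493 — 2 statements merged into one kernel-verified Lean document; each statement's English description precedes it below -/
import Mathlib

section
/- Let $t_0>0$, $C\ge 0$, let $g:[t_0,+\infty)\to\mathcal{Y}$ (a real Hilbert space) be continuously differentiable and $a:[t_0,+\infty)\to[0,+\infty)$ be continuously differentiable. If $\|g(t)+\int_{t_0}^{t} a(s)g(s)\,ds\|\le C$ for all $t\ge t_0$, then $\sup_{t\ge t_0}\|g(t)\|<+\infty$. -/
/-!
Write `F t = ∫_{t₀}^t a g`. Then `F' = a (w - F)` with `w = g + F` bounded by `C`, so
`(e^A F)' = e^A a w` where `A' = a`; comparing with `(C e^A)' = C e^A a` keeps `‖F‖ ≤ C`,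
and hence `‖g‖ ≤ ‖w‖ + ‖F‖ ≤ 2C`.
-/

open Set MeasureTheory Topology

section Relaxation

variable {E : Type*} [NormedAddCommGroup E] [NormedSpace ℝ E]

theorem norm_le_of_hasDerivWithinAt_smul_sub {F w : ℝ → E} {A a : ℝ → ℝ} {t₀ t C : ℝ}
    (hF : ContinuousOn F (Icc t₀ t)) (hA : ContinuousOn A (Icc t₀ t))
    (hF' : ∀ x ∈ Ico t₀ t, HasDerivWithinAt F (a x • (w x - F x)) (Ici x) x)
    (hA' : ∀ x ∈ Ico t₀ t, HasDerivWithinAt A (a x) (Ici x) x)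
    (ha : ∀ x ∈ Ico t₀ t, 0 ≤ a x) (hw : ∀ x ∈ Ico t₀ t, ‖w x‖ ≤ C)
    (hF₀ : ‖F t₀‖ ≤ C) (ht : t₀ ≤ t) : ‖F t‖ ≤ C := by
  have hexpA : ContinuousOn (fun x => Real.exp (A x)) (Icc t₀ t) :=
    Real.continuous_exp.comp_continuousOn hA
  have hu' : ∀ x ∈ Ico t₀ t, HasDerivWithinAt (fun x => Real.exp (A x) • F x)
      ((Real.exp (A x) * a x) • w x) (Ici x) x := fun x hx => by
    refine ((hA' x hx).exp.smul (hF' x hx)).congr_deriv ?_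
    rw [smul_sub, smul_sub, smul_smul, smul_smul, sub_add_cancel]
  have hB' : ∀ x ∈ Ico t₀ t, HasDerivWithinAt (fun x => C * Real.exp (A x))
      (C * (Real.exp (A x) * a x)) (Ici x) x := fun x hx => ((hA' x hx).exp).const_mul C
  have hderiv_le : ∀ x ∈ Ico t₀ t,
      ‖(Real.exp (A x) * a x) • w x‖ ≤ C * (Real.exp (A x) * a x) :=
    fun x hx => by
      have hexp_a : 0 ≤ Real.exp (A x) * a x := mul_nonneg (Real.exp_pos _).le (ha x hx)
      rw [norm_smul, Real.norm_of_nonneg hexp_a, mul_comm C]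
      exact mul_le_mul_of_nonneg_left (hw x hx) hexp_a
  have hinit : ‖Real.exp (A t₀) • F t₀‖ ≤ C * Real.exp (A t₀) := by
    rw [norm_smul, Real.norm_of_nonneg (Real.exp_pos _).le, mul_comm]
    exact mul_le_mul_of_nonneg_right hF₀ (Real.exp_pos _).le
  have key : ‖Real.exp (A t) • F t‖ ≤ C * Real.exp (A t) :=
    image_norm_le_of_norm_deriv_right_le_deriv_boundary' (hexpA.smul hF) hu' hinit
      (continuousOn_const.mul hexpA) hB' hderiv_le (right_mem_Icc.2 ht)
  rw [norm_smul, Real.norm_of_nonneg (Real.exp_pos _).le, mul_comm C] at key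
  exact le_of_mul_le_mul_left key (Real.exp_pos _)

end Relaxation

section Primitive

variable {E : Type*} [NormedAddCommGroup E] [NormedSpace ℝ E] {f : ℝ → E} {t₀ : ℝ}

theorem ContinuousOn.hasDerivWithinAt_primitive_Ici [CompleteSpace E]
    (hf : ContinuousOn f (Ici t₀)) {x : ℝ} (hx : t₀ ≤ x) :
    HasDerivWithinAt (fun t => ∫ s in t₀..t, f s) (f x) (Ici x) x := by
  have hIoi : Ici t₀ ∈ 𝓝[>] x :=
    Filter.mem_of_superset self_mem_nhdsWithin fun _ hy => hx.trans (le_of_lt hy)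
  exact intervalIntegral.integral_hasDerivWithinAt_right
    ((hf.mono (by rw [uIcc_of_le hx]; exact Icc_subset_Ici_self)).intervalIntegrable)
    (AEStronglyMeasurable.stronglyMeasurableAtFilter_of_mem
      (hf.aestronglyMeasurable measurableSet_Ici) hIoi)
    ((hf x hx).mono_of_mem_nhdsWithin hIoi)

theorem ContinuousOn.continuousOn_primitive_Icc (hf : ContinuousOn f (Ici t₀)) {t : ℝ}
    (ht : t₀ ≤ t) : ContinuousOn (fun t => ∫ s in t₀..t, f s) (Icc t₀ t) := by
  rw [← uIcc_of_le ht]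
  exact intervalIntegral.continuousOn_primitive_interval <|
    (hf.mono (by rw [uIcc_of_le ht]; exact Icc_subset_Ici_self)).integrableOn_compact
      isCompact_uIcc

end Primitive

theorem stmt0_general {Y : Type*} [NormedAddCommGroup Y] [InnerProductSpace ℝ Y] [CompleteSpace Y]
    (t₀ C : ℝ) (hC : 0 ≤ C)
    (g : ℝ → Y) (a : ℝ → ℝ)
    (hg : ContDiffOn ℝ 1 g (Set.Ici t₀))
    (ha : ContDiffOn ℝ 1 a (Set.Ici t₀))
    (ha0 : ∀ t ≥ t₀, 0 ≤ a t)
    (hbound : ∀ t ≥ t₀, ‖g t + ∫ s in t₀..t, a s • g s‖ ≤ C) :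
    ∃ M : ℝ, ∀ t ≥ t₀, ‖g t‖ ≤ M := by
  set F : ℝ → Y := fun t => ∫ s in t₀..t, a s • g s
  have hac : ContinuousOn a (Ici t₀) := ha.continuousOn
  have hag : ContinuousOn (fun s => a s • g s) (Ici t₀) := hac.smul hg.continuousOn
  have hF : ∀ t ≥ t₀, ‖F t‖ ≤ C := fun t ht =>
    norm_le_of_hasDerivWithinAt_smul_sub (w := fun x => g x + F x)
      (hag.continuousOn_primitive_Icc ht) (hac.continuousOn_primitive_Icc ht)
      (fun x hx => by
        simpa only [add_sub_cancel_right] using hag.hasDerivWithinAt_primitive_Ici hx.1)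
      (fun x hx => hac.hasDerivWithinAt_primitive_Ici hx.1)
      (fun x hx => ha0 x hx.1) (fun x hx => hbound x hx.1)
      (by simpa [F] using hC) ht
  refine ⟨2 * C, fun t ht => ?_⟩
  calc ‖g t‖ = ‖(g t + F t) - F t‖ := by rw [add_sub_cancel_right]
    _ ≤ ‖g t + F t‖ + ‖F t‖ := norm_sub_le _ _
    _ ≤ C + C := add_le_add (hbound t ht) (hF t ht)
    _ = 2 * C := by ring

theorem stmt0 {Y : Type*} [NormedAddCommGroup Y] [InnerProductSpace ℝ Y] [CompleteSpace Y]
    (t₀ C : ℝ) (ht₀ : 0 < t₀) (hC : 0 ≤ C)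
    (g : ℝ → Y) (a : ℝ → ℝ)
    (hg : ContDiffOn ℝ 1 g (Set.Ici t₀))
    (ha : ContDiffOn ℝ 1 a (Set.Ici t₀))
    (ha0 : ∀ t ≥ t₀, 0 ≤ a t)
    (hbound : ∀ t ≥ t₀, ‖g t + ∫ s in t₀..t, a s • g s‖ ≤ C) :
    ∃ M : ℝ, ∀ t ≥ t₀, ‖g t‖ ≤ M :=
  stmt0_general t₀ C hC g a hg ha ha0 hbound
end

section
/- Let $\theta>0$, $t_0>0$, let $\mathcal{X}$ be a real Hilbert space, $z\in\mathcal{X}$, and let $x:[t_0,+\infty)\to\mathcal{X}$ be continuously differentiable. If there exists a constant $\widehat{C}\ge 0$ such that $\|x(t)-z+\theta t\,\dot{x}(t)\|^2\le\widehat{C}$ for all $t\ge t_0$, then $x$ is bounded on $[t_0,+\infty)$. -/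
/-!
With `h t = ‖x t - z‖ ^ 2`, expanding the square gives `h t + θ t h' t ≤ C`. Wherever `h > C` this
forces `h' < 0`, so `h` never climbs above `max (h t₀) C`.
-/

open Set

theorem le_max_of_add_mul_deriv_le {f f' a : ℝ → ℝ} {t₀ C : ℝ}
    (hf : ∀ t ≥ t₀, HasDerivAt f (f' t) t) (ha : ∀ t ≥ t₀, 0 < a t)
    (hle : ∀ t ≥ t₀, f t + a t * f' t ≤ C) {t : ℝ} (ht : t₀ ≤ t) :
    f t ≤ max (f t₀) C := by
  refine le_of_forall_pos_le_add fun ε hε => ?_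
  have hcont : ContinuousOn f (Icc t₀ t) := fun s hs => (hf s hs.1).continuousAt.continuousWithinAt
  refine image_le_of_deriv_right_lt_deriv_boundary (B' := 0) hcont
    (fun s hs => (hf s hs.1).hasDerivWithinAt) (by linarith [le_max_left (f t₀) C])
    (fun _ => hasDerivAt_const _ _) (fun s hs hfs => ?_) ⟨ht, le_rfl⟩
  have hfC : C < f s := by linarith [le_max_right (f t₀) C]
  have : a s * f' s < 0 := by linarith [hle s hs.1]
  exact neg_of_mul_neg_right this (ha s hs.1).le

theorem norm_sq_add_mul_two_inner_le {X : Type*} [NormedAddCommGroup X] [InnerProductSpace ℝ X]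
    (u v : X) (a : ℝ) : ‖u‖ ^ 2 + a * (2 * inner ℝ u v) ≤ ‖u + a • v‖ ^ 2 := by
  rw [norm_add_sq_real, real_inner_smul_right]
  nlinarith [sq_nonneg ‖a • v‖]

theorem stmt2_general {X : Type*} [NormedAddCommGroup X] [InnerProductSpace ℝ X]
    (θ t₀ : ℝ) (hθ : 0 < θ) (ht₀ : 0 < t₀) (z : X)
    (x x' : ℝ → X)
    (hx : ∀ t ≥ t₀, HasDerivAt x (x' t) t)
    (C : ℝ)
    (hb : ∀ t ≥ t₀, ‖x t - z + (θ * t) • x' t‖ ^ 2 ≤ C) :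
    ∃ M : ℝ, ∀ t ≥ t₀, ‖x t‖ ≤ M := by
  have hdist : ∀ t ≥ t₀, ‖x t - z‖ ^ 2 ≤ max (‖x t₀ - z‖ ^ 2) C :=
    fun t ht => le_max_of_add_mul_deriv_le (f := fun s => ‖x s - z‖ ^ 2)
      (fun s hs => ((hx s hs).sub_const z).norm_sq)
      (fun s hs => mul_pos hθ (ht₀.trans_le hs))
      (fun s hs => (norm_sq_add_mul_two_inner_le _ _ _).trans (hb s hs)) ht
  refine ⟨√(max (‖x t₀ - z‖ ^ 2) C) + ‖z‖, fun t ht => ?_⟩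
  calc ‖x t‖ = ‖x t - z + z‖ := by rw [sub_add_cancel]
    _ ≤ ‖x t - z‖ + ‖z‖ := norm_add_le _ _
    _ ≤ √(max (‖x t₀ - z‖ ^ 2) C) + ‖z‖ := by gcongr; exact Real.le_sqrt_of_sq_le (hdist t ht)

theorem stmt2 {X : Type*} [NormedAddCommGroup X] [InnerProductSpace ℝ X]
    (θ t₀ : ℝ) (hθ : 0 < θ) (ht₀ : 0 < t₀) (z : X)
    (x x' : ℝ → X)
    (hx : ∀ t ≥ t₀, HasDerivAt x (x' t) t)
    (hx' : ContinuousOn x' (Set.Ici t₀))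
    (C : ℝ) (hC : 0 ≤ C)
    (hb : ∀ t ≥ t₀, ‖x t - z + (θ * t) • x' t‖ ^ 2 ≤ C) :
    ∃ M : ℝ, ∀ t ≥ t₀, ‖x t‖ ≤ M :=
  stmt2_general θ t₀ hθ ht₀ z x x' hx C hb
end
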